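/- Every 2-finite matrix is skew-symmetrizable. -/

import Mathlib

/-!
Call a closed walk `u₀ → u₁ → ⋯ → u_m = u₀` along nonzero entries of `B` balanced if
`∏ |b_{u_t u_{t+1}}| = ∏ |b_{u_{t+1} u_t}|`. When every closed walk is balanced, the ratio of
these two products along a walk from a base point of each connected component to `i` does not
depend on the walk, and taking it as `d_i` skew-symmetrizes `B`.

For a 2-finite `B` a shortest unbalanced closed walk cannot exist. A repeated vertex or a chord
would split it into two shorter closed walks, so it is a chordless cycle. A triangle is excluded
by a finite check: each pair `(b_ij, b_ji)` takes one of ten values, and one mutation at each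
vertex detects every unbalanced triangle. On a longer chordless cycle `u₀ u₁ u₂ ⋯`, if
`b_{u₀u₁} b_{u₁u₂} > 0` then mutating at `u₁` creates the chord `u₀u₂` with
`|b'_{u₀u₂}| = |b_{u₀u₁}| |b_{u₁u₂}|`, giving a shorter unbalanced closed
walk `u₀ u₂ ⋯`. Otherwise mutating at `u₂` keeps `b_{u₀u₁}` and every `|b|` along the cycle but
negates `b_{u₁u₂}`, which leads back to the first case.
-/

/-- Matrix mutation in direction `k` for integer matrices. -/
def mutZ {n : ℕ} (k : Fin n) (B : Matrix (Fin n) (Fin n) ℤ) : Matrix (Fin n) (Fin n) ℤ :=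
  Matrix.of fun i j =>
    if i = k ∨ j = k then -B i j
    else B i j + (|B i k| * B k j + B i k * |B k j|) / 2

/-- Sign-skew-symmetry for integer matrices. -/
def SignSkewSymmetric {n : ℕ} (B : Matrix (Fin n) (Fin n) ℤ) : Prop :=
  ∀ i j, (B i j = 0 ∧ B j i = 0) ∨ B i j * B j i < 0

/-- An integer matrix is 2-finite if every matrix obtained from it by a finite
sequence of mutations is sign-skew-symmetric with `|b'_ij b'_ji| ≤ 3`. -/
def TwoFinite {n : ℕ} (B : Matrix (Fin n) (Fin n) ℤ) : Prop :=
  ∀ l : List (Fin n),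
    SignSkewSymmetric (l.foldl (fun M k => mutZ k M) B) ∧
    ∀ i j, |(l.foldl (fun M k => mutZ k M) B) i j *
            (l.foldl (fun M k => mutZ k M) B) j i| ≤ 3

open Finset Matrix

theorem mul_eq_neg_mul_of_mul_abs_eq {R : Type*} [CommRing R] [LinearOrder R]
    [IsStrictOrderedRing R] {a b x y : R} (hxy : x * y < 0) (h : a * |x| = b * |y|) :
    a * x = -(b * y) := by
  rcases mul_neg_iff.mp hxy with ⟨hx, hy⟩ | ⟨hx, hy⟩
  · rw [abs_of_pos hx, abs_of_neg hy] at h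
    linarith
  · rw [abs_of_neg hx, abs_of_pos hy] at h
    linarith

section Walks

variable {ι : Type*}

def IsWalk (B : Matrix ι ι ℤ) (m : ℕ) (u : ℕ → ι) : Prop :=
  ∀ t < m, B (u t) (u (t + 1)) ≠ 0

def walkProd (B : Matrix ι ι ℤ) (m : ℕ) (u : ℕ → ι) : ℤ :=
  ∏ t ∈ range m, |B (u t) (u (t + 1))|

def walkRatio (B : Matrix ι ι ℤ) (m : ℕ) (u : ℕ → ι) : ℚ :=
  walkProd B m u / walkProd Bᵀ m u

def walkAppend (u : ℕ → ι) (a : ℕ) (v : ℕ → ι) : ℕ → ι :=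
  fun t => if t ≤ a then u t else v (t - a)

def edgeWalk (x y : ι) : ℕ → ι :=
  fun t => if t = 0 then x else y

variable {B C : Matrix ι ι ℤ} {m a b : ℕ} {u v : ℕ → ι}

theorem walkProd_congr (h : ∀ t ≤ m, u t = v t) : walkProd B m u = walkProd B m v :=
  prod_congr rfl fun t ht => by
    rw [h t (by simp at ht; omega), h (t + 1) (by simp at ht; omega)]

theorem walkProd_congr_abs (h : ∀ t < m, |C (u t) (u (t + 1))| = |B (u t) (u (t + 1))|) :
    walkProd C m u = walkProd B m u :=
  prod_congr rfl fun t ht => h t (mem_range.mp ht)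

theorem walkProd_add :
    walkProd B (a + b) u = walkProd B a u * walkProd B b (fun t => u (a + t)) := by
  simp only [walkProd, prod_range_add, add_assoc]

theorem walkProd_split {s t : ℕ} (hst : s ≤ t) (htm : t ≤ m) :
    walkProd B m u = walkProd B s u * walkProd B (t - s) (fun r => u (s + r)) *
      walkProd B (m - t) (fun r => u (t + r)) := by
  obtain ⟨a, rfl⟩ := Nat.exists_eq_add_of_le hst
  obtain ⟨b, rfl⟩ := Nat.exists_eq_add_of_le htm
  rw [Nat.add_sub_cancel_left, Nat.add_sub_cancel_left]
  simp only [walkProd_add, mul_assoc, add_assoc]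

theorem walkProd_reverse : walkProd B m (fun t => u (m - t)) = walkProd Bᵀ m u := by
  rw [walkProd, ← prod_range_reflect]
  refine prod_congr rfl fun t ht => ?_
  have : t < m := mem_range.mp ht
  rw [show m - (m - 1 - t) = t + 1 by omega, show m - (m - 1 - t + 1) = t by omega]
  rfl

theorem walkProd_edgeWalk (x y : ι) : walkProd B 1 (edgeWalk x y) = |B x y| := by
  simp [walkProd, edgeWalk]

theorem isWalk_iff_walkProd_ne_zero : IsWalk B m u ↔ walkProd B m u ≠ 0 := by
  simp [IsWalk, walkProd, prod_ne_zero_iff]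

theorem walkProd_pos (hu : IsWalk B m u) : 0 < walkProd B m u :=
  prod_pos fun t ht => abs_pos.mpr (hu t (mem_range.mp ht))

theorem walkAppend_of_le {t : ℕ} (ht : t ≤ a) : walkAppend u a v t = u t :=
  if_pos ht

theorem walkAppend_add (hj : u a = v 0) (t : ℕ) : walkAppend u a v (a + t) = v t := by
  rcases Nat.eq_zero_or_pos t with rfl | ht
  · simp [walkAppend, hj]
  · simp [walkAppend, show ¬ a + t ≤ a by omega]

theorem walkProd_walkAppend (b : ℕ) (hj : u a = v 0) :
    walkProd B (a + b) (walkAppend u a v) = walkProd B a u * walkProd B b v := by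
  rw [walkProd_add, walkProd_congr fun t ht => walkAppend_of_le ht]
  simp only [walkAppend_add hj]

theorem IsWalk.mono (hu : IsWalk B m u) (h : a ≤ m) : IsWalk B a u :=
  fun t ht => hu t (by omega)

theorem IsWalk.shift (hu : IsWalk B m u) (h : a + b ≤ m) : IsWalk B b (fun t => u (a + t)) :=
  fun t ht => hu (a + t) (by omega)

theorem IsWalk.transpose (hB : ∀ {i j}, B i j ≠ 0 → B j i ≠ 0) (hu : IsWalk B m u) :
    IsWalk Bᵀ m u :=
  fun t ht => hB (hu t ht)

theorem IsWalk.reverse (hB : ∀ {i j}, B i j ≠ 0 → B j i ≠ 0) (hu : IsWalk B m u) :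
    IsWalk B m (fun t => u (m - t)) := by
  intro t ht
  have := hB (hu (m - t - 1) (by omega))
  rwa [show m - t - 1 + 1 = m - t by omega, show m - t - 1 = m - (t + 1) by omega] at this

theorem IsWalk.walkAppend (hu : IsWalk B a u) (hv : IsWalk B b v) (hj : u a = v 0) :
    IsWalk B (a + b) (walkAppend u a v) := by
  intro t ht
  rcases Nat.lt_or_ge t a with hta | hta
  · rw [walkAppend_of_le hta.le, walkAppend_of_le hta]
    exact hu t hta
  · obtain ⟨s, rfl⟩ := Nat.exists_eq_add_of_le hta
    rw [add_assoc, walkAppend_add hj, walkAppend_add hj]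
    exact hv s (by omega)

theorem isWalk_edgeWalk {x y : ι} (h : B x y ≠ 0) : IsWalk B 1 (edgeWalk x y) := by
  intro t ht
  simpa [edgeWalk, show t = 0 by omega] using h

theorem walkRatio_pos (hB : ∀ {i j}, B i j ≠ 0 → B j i ≠ 0) (hu : IsWalk B m u) :
    0 < walkRatio B m u :=
  div_pos (mod_cast walkProd_pos hu) (mod_cast walkProd_pos (hu.transpose hB))

theorem exists_walk_of_eqvGen (hB : ∀ {i j}, B i j ≠ 0 → B j i ≠ 0) {x y : ι}
    (h : Relation.EqvGen (fun i j => B i j ≠ 0) x y) :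
    ∃ m u, IsWalk B m u ∧ u 0 = x ∧ u m = y := by
  induction h with
  | rel x y hxy => exact ⟨1, edgeWalk x y, isWalk_edgeWalk hxy, rfl, by simp [edgeWalk]⟩
  | refl x => exact ⟨0, fun _ => x, fun t ht => absurd ht (Nat.not_lt_zero t), rfl, rfl⟩
  | symm x y _ ih =>
    obtain ⟨m, u, hu, hu0, hum⟩ := ih
    exact ⟨m, fun t => u (m - t), hu.reverse hB, by simpa using hum, by simpa using hu0⟩
  | trans x y z _ _ ih₁ ih₂ =>
    obtain ⟨m₁, u₁, hu₁, hu₁0, hu₁m⟩ := ih₁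
    obtain ⟨m₂, u₂, hu₂, hu₂0, hu₂m⟩ := ih₂
    have hj : u₁ m₁ = u₂ 0 := hu₁m.trans hu₂0.symm
    exact ⟨m₁ + m₂, walkAppend u₁ m₁ u₂, hu₁.walkAppend hu₂ hj,
      by rw [walkAppend_of_le (Nat.zero_le _), hu₁0], by rw [walkAppend_add hj, hu₂m]⟩

end Walks

section Mutation

variable {n : ℕ}

namespace SignSkewSymmetric

variable {B : Matrix (Fin n) (Fin n) ℤ} (hB : SignSkewSymmetric B)
include hB

theorem mul_neg {i j : Fin n} (h : B i j ≠ 0) : B i j * B j i < 0 :=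
  (hB i j).resolve_left fun h' => h h'.1

theorem apply_ne_zero {i j : Fin n} (h : B i j ≠ 0) : B j i ≠ 0 := by
  have := hB.mul_neg h
  rintro h'
  simp [h'] at this

theorem apply_self (i : Fin n) : B i i = 0 := by
  by_contra h
  nlinarith [hB.mul_neg h]

theorem ne_of_apply_ne_zero {i j : Fin n} (h : B i j ≠ 0) : i ≠ j := by
  rintro rfl
  exact h (hB.apply_self i)

end SignSkewSymmetric

def Admissible (B : Matrix (Fin n) (Fin n) ℤ) : Prop :=
  SignSkewSymmetric B ∧ ∀ i j, |B i j * B j i| ≤ 3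

instance (B : Matrix (Fin n) (Fin n) ℤ) : Decidable (SignSkewSymmetric B) :=
  @Nat.decidableForallFin _ _ fun _ => Nat.decidableForallFin _

instance (B : Matrix (Fin n) (Fin n) ℤ) : Decidable (Admissible B) :=
  instDecidableAnd (dq := Nat.decidableForallFin _)

variable {B : Matrix (Fin n) (Fin n) ℤ} {i j k : Fin n}

theorem Admissible.submatrix {m : ℕ} (hB : Admissible B)
    (e : Fin m → Fin n) : Admissible (B.submatrix e e) :=
  ⟨fun i j => hB.1 (e i) (e j), fun i j => hB.2 (e i) (e j)⟩

theorem TwoFinite.admissible (hB : TwoFinite B) : Admissible B :=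
  hB []

theorem TwoFinite.mutate (hB : TwoFinite B) (k : Fin n) :
    TwoFinite (mutZ k B) :=
  fun l => hB (k :: l)

theorem mutZ_apply_left (j : Fin n) : mutZ k B k j = -B k j := by
  simp [mutZ]

theorem mutZ_apply_right (i : Fin n) : mutZ k B i k = -B i k := by
  simp [mutZ]

theorem mutZ_apply_of_ne (hi : i ≠ k) (hj : j ≠ k) :
    mutZ k B i j = B i j + (|B i k| * B k j + B i k * |B k j|) / 2 := by
  simp [mutZ, hi, hj]

theorem mutZ_apply_eq (hi : i ≠ k) (hj : j ≠ k) (h : B i k = 0 ∨ B k j = 0) :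
    mutZ k B i j = B i j := by
  rcases h with h | h <;> simp [mutZ_apply_of_ne hi hj, h]

theorem abs_mutZ_apply (h : B i k = 0 ∨ B k j = 0) : |mutZ k B i j| = |B i j| := by
  by_cases hi : i = k
  · rw [hi, mutZ_apply_left, abs_neg]
  by_cases hj : j = k
  · rw [hj, mutZ_apply_right, abs_neg]
  rw [mutZ_apply_eq hi hj h]

theorem abs_mutZ_apply_of_mul_pos (hi : i ≠ k) (hj : j ≠ k) (hij : B i j = 0)
    (h : 0 < B i k * B k j) : |mutZ k B i j| = |B i k| * |B k j| := by
  rw [mutZ_apply_of_ne hi hj, hij, zero_add, ← abs_mul]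
  rcases mul_pos_iff.mp h with ⟨h1, h2⟩ | ⟨h1, h2⟩
  · have : |B i k| * B k j + B i k * |B k j| = 2 * (B i k * B k j) := by
      rw [abs_of_pos h1, abs_of_pos h2]; ring
    rw [this, Int.mul_ediv_cancel_left _ two_ne_zero]
  · have : |B i k| * B k j + B i k * |B k j| = 2 * -(B i k * B k j) := by
      rw [abs_of_neg h1, abs_of_neg h2]; ring
    rw [this, Int.mul_ediv_cancel_left _ two_ne_zero, abs_neg]

theorem mutZ_transpose : (mutZ k B)ᵀ = mutZ k Bᵀ := by
  ext i j
  simp only [transpose_apply, mutZ, of_apply, or_comm]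
  split_ifs
  · rfl
  · congr 2
    ring

theorem mutZ_submatrix {m : ℕ} (e : Fin m → Fin n) (he : Function.Injective e) (k : Fin m) :
    mutZ k (B.submatrix e e) = (mutZ (e k) B).submatrix e e := by
  ext i j
  simp only [submatrix_apply, mutZ, of_apply, he.eq_iff]

end Mutation

section Triangle

def skewPairs : List (ℤ × ℤ) :=
  [(1, -1), (-1, 1), (1, -2), (-2, 1), (2, -1), (-1, 2), (1, -3), (-3, 1), (3, -1), (-1, 3)]

theorem mem_skewPairs {x y : ℤ} (h : x * y < 0) (hb : |x * y| ≤ 3) : (x, y) ∈ skewPairs := by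
  have hx : x ≠ 0 := by rintro rfl; simp at h
  have hy : y ≠ 0 := by rintro rfl; simp at h
  have hx3 : |x| ≤ 3 := by
    nlinarith [abs_mul x y, abs_nonneg x, Int.one_le_abs hy]
  have hy3 : |y| ≤ 3 := by
    nlinarith [abs_mul x y, abs_nonneg y, Int.one_le_abs hx]
  rw [abs_le] at hx3 hy3
  obtain ⟨hx1, hx2⟩ := hx3
  obtain ⟨hy1, hy2⟩ := hy3
  interval_cases x <;> interval_cases y <;> revert h hb <;> decide

def triangleMatrix (p q r : ℤ × ℤ) : Matrix (Fin 3) (Fin 3) ℤ :=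
  !![0, p.1, r.2; p.2, 0, q.1; r.1, q.2, 0]

theorem abs_cycle_eq_of_admissible_mutZ :
    ∀ p ∈ skewPairs, ∀ q ∈ skewPairs, ∀ r ∈ skewPairs,
      (∀ k, Admissible (mutZ k (triangleMatrix p q r))) →
        |p.1 * q.1 * r.1| = |p.2 * q.2 * r.2| := by
  decide

theorem TwoFinite.abs_triangle {n : ℕ} {B : Matrix (Fin n) (Fin n) ℤ} (hB : TwoFinite B)
    {i j k : Fin n} (hij : B i j ≠ 0) (hjk : B j k ≠ 0) (hki : B k i ≠ 0) :
    |B i j * B j k * B k i| = |B j i * B k j * B i k| := by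
  obtain ⟨hs, hb⟩ := hB.admissible
  have he : Function.Injective ![i, j, k] := by
    have := hs.ne_of_apply_ne_zero hij
    have := hs.ne_of_apply_ne_zero hjk
    have := hs.ne_of_apply_ne_zero hki
    intro a b hab
    fin_cases a <;> fin_cases b <;> simp_all [eq_comm]
  have hC : B.submatrix ![i, j, k] ![i, j, k] =
      triangleMatrix (B i j, B j i) (B j k, B k j) (B k i, B i k) := by
    ext a b
    fin_cases a <;> fin_cases b <;> simp [triangleMatrix, hs.apply_self]
  have hmut (c : Fin 3) : Admissible (mutZ c (B.submatrix ![i, j, k] ![i, j, k])) := by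
    rw [mutZ_submatrix _ he]
    exact (hB.mutate _).admissible.submatrix _
  rw [hC] at hmut
  exact abs_cycle_eq_of_admissible_mutZ _ (mem_skewPairs (hs.mul_neg hij) (hb i j))
    _ (mem_skewPairs (hs.mul_neg hjk) (hb j k)) _ (mem_skewPairs (hs.mul_neg hki) (hb k i)) hmut

end Triangle

section Cycles

variable {ι : Type*}

def CyclicAdj (m s t : ℕ) : Prop :=
  s + 1 = t ∨ t + 1 = s ∨ (s = 0 ∧ t + 1 = m) ∨ (t = 0 ∧ s + 1 = m)

def IsChordless (B : Matrix ι ι ℤ) (m : ℕ) (u : ℕ → ι) : Prop :=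
  ∀ s < m, ∀ t < m, B (u s) (u t) ≠ 0 → CyclicAdj m s t

def shortcut (u : ℕ → ι) : ℕ → ι :=
  fun t => if t = 0 then u 0 else u (t + 1)

namespace IsChordless

variable {B : Matrix ι ι ℤ} {m : ℕ} {u : ℕ → ι}

theorem transpose (hch : IsChordless B m u) : IsChordless Bᵀ m u := fun s hs t ht h => by
  have := hch t ht s hs h
  unfold CyclicAdj at *
  omega

theorem apply_eq_zero (hch : IsChordless B m u) {s t : ℕ} (hs : s < m) (ht : t < m)
    (hst : ¬CyclicAdj m s t) : B (u s) (u t) = 0 :=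
  not_imp_comm.mp (hch s hs t ht) hst

theorem ne_of_apply_ne_zero (hch : IsChordless B m u) (hm : 2 ≤ m) {s t : ℕ} (ht : t < m)
    (h : B (u s) (u t) ≠ 0) : u s ≠ u t := by
  intro heq
  rw [heq] at h
  have := hch t ht t ht h
  unfold CyclicAdj at this
  omega

end IsChordless

end Cycles

namespace IsChordless

variable {n m : ℕ} {B : Matrix (Fin n) (Fin n) ℤ} {u : ℕ → Fin n}

theorem abs_mutZ_apply (hch : IsChordless B m u) (hcl : u m = u 0) (hm : 4 ≤ m) {c t : ℕ}
    (hc : c < m) (ht : t < m) :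
    |mutZ (u c) B (u t) (u (t + 1))| = |B (u t) (u (t + 1))| := by
  refine _root_.abs_mutZ_apply ?_
  by_contra! h
  have h1 := hch t ht c hc h.1
  rcases Nat.lt_or_ge (t + 1) m with ht' | ht'
  · have h2 := hch c hc (t + 1) ht' h.2
    unfold CyclicAdj at h1 h2
    omega
  · rw [show t + 1 = m by omega, hcl] at h
    have h2 := hch c hc 0 (by omega) h.2
    unfold CyclicAdj at h1 h2
    omega

theorem walkProd_mutZ_shortcut (hch : IsChordless B m u) (hcl : u m = u 0) (hm : 4 ≤ m)
    (hdir : 0 < B (u 0) (u 1) * B (u 1) (u 2)) :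
    walkProd (mutZ (u 1) B) (m - 1) (shortcut u) = walkProd B m u := by
  obtain ⟨k, rfl⟩ : ∃ k, m = k + 4 := ⟨m - 4, by omega⟩
  have h02 : B (u 0) (u 2) = 0 :=
    hch.apply_eq_zero (by omega) (by omega) (by unfold CyclicAdj; omega)
  have hne : u 0 ≠ u 1 ∧ u 2 ≠ u 1 := by
    obtain ⟨h01, h12⟩ := mul_ne_zero_iff.mp hdir.ne'
    exact ⟨hch.ne_of_apply_ne_zero (by omega) (by omega) h01,
      (hch.ne_of_apply_ne_zero (by omega) (by omega) h12).symm⟩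
  have hchord : |mutZ (u 1) B (u 0) (u 2)| = |B (u 0) (u 1)| * |B (u 1) (u 2)| :=
    abs_mutZ_apply_of_mul_pos hne.1 hne.2 h02 hdir
  have hrest : ∀ t ∈ range (k + 2),
      |mutZ (u 1) B (u (t + 2)) (u (t + 2 + 1))| = |B (u (t + 2)) (u (t + 2 + 1))| :=
    fun t ht => hch.abs_mutZ_apply hcl (by omega) (by omega) (by simp at ht; omega)
  simp only [walkProd, shortcut, show k + 4 - 1 = k + 2 + 1 by omega, prod_range_succ' _ (k + 2),
    prod_range_succ' _ (k + 3), if_true, Nat.add_one_ne_zero, if_false]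
  rw [prod_congr rfl hrest, hchord]
  ring

end IsChordless

def CycleCondition (n m : ℕ) : Prop :=
  ∀ B : Matrix (Fin n) (Fin n) ℤ, TwoFinite B →
    ∀ u : ℕ → Fin n, IsWalk B m u → u m = u 0 → walkProd Bᵀ m u = walkProd B m u

section CycleCondition

variable {n m : ℕ} {B : Matrix (Fin n) (Fin n) ℤ} {u : ℕ → Fin n}

theorem walkProd_transpose_of_repeat (IH : ∀ k < m, CycleCondition n k) (hB : TwoFinite B)
    (hu : IsWalk B m u) (hcl : u m = u 0) {s t : ℕ} (hst : s < t) (htm : t < m)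
    (heq : u s = u t) : walkProd Bᵀ m u = walkProd B m u := by
  have hj : u s = u (t + 0) := heq
  have hloop := IH (t - s) (by omega) B hB (fun r => u (s + r)) (hu.shift (by omega))
    (by simp only [add_zero, show s + (t - s) = t by omega, heq])
  have hrest := IH (s + (m - t)) (by omega) B hB (walkAppend u s fun r => u (t + r))
    ((hu.mono (by omega)).walkAppend (hu.shift (by omega)) hj)
    (by rw [walkAppend_add hj, walkAppend_of_le (Nat.zero_le _), Nat.add_sub_of_le htm.le, hcl])
  rw [walkProd_walkAppend _ hj, walkProd_walkAppend _ hj] at hrest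
  rw [walkProd_split hst.le htm.le, walkProd_split (B := B) hst.le htm.le]
  calc _ = walkProd Bᵀ (t - s) (fun r => u (s + r)) *
        (walkProd Bᵀ s u * walkProd Bᵀ (m - t) fun r => u (t + r)) := by ring
    _ = _ := by rw [hloop, hrest]; ring

theorem walkProd_transpose_of_chord (IH : ∀ k < m, CycleCondition n k) (hB : TwoFinite B)
    (hu : IsWalk B m u) (hcl : u m = u 0) {s t : ℕ} (hst : s + 1 < t) (htm : t < m)
    (hout : ¬(s = 0 ∧ t + 1 = m)) (hchord : B (u s) (u t) ≠ 0) :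
    walkProd Bᵀ m u = walkProd B m u := by
  have hs := hB.admissible.1
  have hX : |B (u t) (u s)| * |B (u s) (u t)| ≠ 0 :=
    mul_ne_zero (abs_ne_zero.mpr (hs.apply_ne_zero hchord)) (abs_ne_zero.mpr hchord)
  refine mul_right_cancel₀ hX ?_
  have hst' : s ≤ t := by omega
  rw [walkProd_split hst' htm.le, walkProd_split (B := B) hst' htm.le]
  set mid : ℕ → Fin n := fun r => u (s + r)
  set post : ℕ → Fin n := fun r => u (t + r)
  have hj₁ : mid (t - s) = edgeWalk (u t) (u s) 0 := by
    simp [mid, edgeWalk, show s + (t - s) = t by omega]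
  have hj₂ : u s = edgeWalk (u s) (u t) 0 := rfl
  have hj₃ : walkAppend u s (edgeWalk (u s) (u t)) (s + 1) = post 0 := by
    simp [post, walkAppend_add hj₂, edgeWalk]
  have hloop := IH (t - s + 1) (by omega) B hB (walkAppend mid (t - s) (edgeWalk (u t) (u s)))
    ((hu.shift (by omega)).walkAppend (isWalk_edgeWalk (hs.apply_ne_zero hchord)) hj₁)
    (by rw [walkAppend_add hj₁, walkAppend_of_le (Nat.zero_le _)]; simp [mid, edgeWalk])
  have hrest := IH (s + 1 + (m - t)) (by omega) B hB
    (walkAppend (walkAppend u s (edgeWalk (u s) (u t))) (s + 1) post)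
    (((hu.mono (by omega)).walkAppend (isWalk_edgeWalk hchord) hj₂).walkAppend
      (hu.shift (by omega)) hj₃)
    (by rw [walkAppend_add hj₃, walkAppend_of_le (Nat.zero_le _),
          walkAppend_of_le (Nat.zero_le _)]
        simp [post, Nat.add_sub_of_le htm.le, hcl])
  simp only [walkProd_walkAppend _ hj₁, walkProd_walkAppend _ hj₂, walkProd_walkAppend _ hj₃,
    walkProd_edgeWalk, transpose_apply] at hloop hrest
  calc _ = (walkProd Bᵀ (t - s) mid * |B (u s) (u t)|) *
        (walkProd Bᵀ s u * |B (u t) (u s)| * walkProd Bᵀ (m - t) post) := by ring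
    _ = _ := by rw [hloop, hrest]; ring

theorem isChordless_of_walkProd_transpose_ne (IH : ∀ k < m, CycleCondition n k)
    (hB : TwoFinite B) (hu : IsWalk B m u) (hcl : u m = u 0)
    (hne : walkProd Bᵀ m u ≠ walkProd B m u) : IsChordless B m u := by
  have hs := hB.admissible.1
  have key : ∀ s t, s < t → t < m → B (u s) (u t) ≠ 0 → CyclicAdj m s t := by
    intro s t hst htm h
    by_contra hadj
    unfold CyclicAdj at hadj
    exact hne (walkProd_transpose_of_chord IH hB hu hcl (by omega) htm (by omega) h)
  intro s hs' t ht h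
  rcases lt_trichotomy s t with hst | rfl | hst
  · exact key s t hst ht h
  · exact absurd (hs.apply_self _) h
  · have := key t s hst hs' (hs.apply_ne_zero h)
    unfold CyclicAdj at this ⊢
    omega

theorem mul_neg_of_walkProd_transpose_ne (IH : ∀ k < m, CycleCondition n k)
    (hB : TwoFinite B) (hu : IsWalk B m u) (hcl : u m = u 0) (hm : 4 ≤ m)
    (hne : walkProd Bᵀ m u ≠ walkProd B m u) : B (u 0) (u 1) * B (u 1) (u 2) < 0 := by
  have hs := hB.admissible.1
  have hch := isChordless_of_walkProd_transpose_ne IH hB hu hcl hne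
  by_contra! hnonneg
  have hdir : 0 < B (u 0) (u 1) * B (u 1) (u 2) :=
    hnonneg.lt_of_ne (mul_ne_zero (hu 0 (by omega)) (hu 1 (by omega))).symm
  have hdirT : 0 < Bᵀ (u 0) (u 1) * Bᵀ (u 1) (u 2) := by
    simp only [transpose_apply]
    nlinarith [hs.mul_neg (hu 0 (by omega)), hs.mul_neg (hu 1 (by omega))]
  have hshort := hch.walkProd_mutZ_shortcut hcl hm hdir
  have hshortT := hch.transpose.walkProd_mutZ_shortcut hcl hm hdirT
  rw [← mutZ_transpose] at hshortT
  refine hne ?_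
  rw [← hshort, ← hshortT]
  refine IH (m - 1) (by omega) _ (hB.mutate _) _ ?_ ?_
  · rw [isWalk_iff_walkProd_ne_zero, hshort, ← isWalk_iff_walkProd_ne_zero]
    exact hu
  · simp [shortcut, show m - 1 ≠ 0 by omega, show m - 1 + 1 = m by omega, hcl]

theorem walkProd_transpose_of_four_le (IH : ∀ k < m, CycleCondition n k) (hB : TwoFinite B)
    (hu : IsWalk B m u) (hcl : u m = u 0) (hm : 4 ≤ m) : walkProd Bᵀ m u = walkProd B m u := by
  by_contra hne
  have hch := isChordless_of_walkProd_transpose_ne IH hB hu hcl hne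
  have hflip : walkProd (mutZ (u 2) B) m u = walkProd B m u :=
    walkProd_congr_abs fun t ht => hch.abs_mutZ_apply hcl hm (by omega) ht
  have hflipT : walkProd (mutZ (u 2) B)ᵀ m u = walkProd Bᵀ m u := by
    rw [mutZ_transpose]
    exact walkProd_congr_abs fun t ht => hch.transpose.abs_mutZ_apply hcl hm (by omega) ht
  have hneg := mul_neg_of_walkProd_transpose_ne IH hB hu hcl hm hne
  have hneg' := mul_neg_of_walkProd_transpose_ne IH (hB.mutate (u 2))
    (by rwa [isWalk_iff_walkProd_ne_zero, hflip, ← isWalk_iff_walkProd_ne_zero]) hcl hm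
    (by rwa [hflip, hflipT])
  have h02 : u 0 ≠ u 2 := fun h =>
    hne (walkProd_transpose_of_repeat IH hB hu hcl (by omega) (by omega) h)
  have h12 : u 1 ≠ u 2 := hch.ne_of_apply_ne_zero (by omega) (by omega) (hu 1 (by omega))
  have hB02 : B (u 0) (u 2) = 0 :=
    hch.apply_eq_zero (by omega) (by omega) (by unfold CyclicAdj; omega)
  rw [mutZ_apply_eq h02 h12 (Or.inl hB02), mutZ_apply_right] at hneg'
  linarith

end CycleCondition

theorem cycleCondition (n m : ℕ) : CycleCondition n m := by
  induction m using Nat.strong_induction_on with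
  | _ m IH =>
  intro B hB u hu hcl
  match m, IH, hu, hcl with
  | 0, _, _, _ => simp [walkProd]
  | 1, _, _, hcl => simp [walkProd, hcl]
  | 2, _, _, hcl => simp [walkProd, prod_range_succ, hcl, mul_comm]
  | 3, _, hu, hcl =>
    have := hB.abs_triangle (hu 0 (by omega)) (hu 1 (by omega)) (hcl ▸ hu 2 (by omega))
    simp only [abs_mul] at this
    simp only [walkProd, prod_range_succ, prod_range_zero, one_mul, transpose_apply, zero_add,
      Nat.reduceAdd, hcl]
    linarith
  | m + 4, IH, hu, hcl => exact walkProd_transpose_of_four_le IH hB hu hcl (by omega)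

theorem TwoFinite.walkProd_mul_walkProd_transpose {n : ℕ} {B : Matrix (Fin n) (Fin n) ℤ}
    (hB : TwoFinite B) {a b : ℕ} {u v : ℕ → Fin n} (hu : IsWalk B a u) (hv : IsWalk B b v)
    (h0 : u 0 = v 0) (h1 : u a = v b) :
    walkProd B a u * walkProd Bᵀ b v = walkProd Bᵀ a u * walkProd B b v := by
  have hj : u a = (fun t => v (b - t)) 0 := by simpa using h1
  have hloop := cycleCondition n (a + b) B hB (walkAppend u a fun t => v (b - t))
    (hu.walkAppend (hv.reverse hB.admissible.1.apply_ne_zero) hj)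
    (by rw [walkAppend_add hj, walkAppend_of_le (Nat.zero_le _)]; simpa using h0.symm)
  rwa [walkProd_walkAppend _ hj, walkProd_walkAppend _ hj, walkProd_reverse, walkProd_reverse,
    transpose_transpose, eq_comm] at hloop

theorem TwoFinite.walkRatio_mul_apply {n : ℕ} {B : Matrix (Fin n) (Fin n) ℤ} (hB : TwoFinite B)
    {a b : ℕ} {u v : ℕ → Fin n} {i j : Fin n} (hu : IsWalk B a u) (hv : IsWalk B b v)
    (h0 : u 0 = v 0) (hi : u a = i) (hj : v b = j) (hij : B i j ≠ 0) :
    walkRatio B a u * B i j = -(walkRatio B b v * B j i) := by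
  have hs := hB.admissible.1
  have hjoin : u a = edgeWalk i j 0 := hi
  have hratio := hB.walkProd_mul_walkProd_transpose
    (hu.walkAppend (isWalk_edgeWalk hij) hjoin) hv
    (by rw [walkAppend_of_le (Nat.zero_le _), h0]) (by rw [walkAppend_add hjoin, hj]; rfl)
  rw [walkProd_walkAppend _ hjoin, walkProd_walkAppend _ hjoin, walkProd_edgeWalk,
    walkProd_edgeWalk, transpose_apply] at hratio
  refine mul_eq_neg_mul_of_mul_abs_eq (mod_cast hs.mul_neg hij) ?_
  have hu' : (0 : ℚ) < walkProd Bᵀ a u := mod_cast walkProd_pos (hu.transpose hs.apply_ne_zero)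
  have hv' : (0 : ℚ) < walkProd Bᵀ b v := mod_cast walkProd_pos (hv.transpose hs.apply_ne_zero)
  rw [walkRatio, walkRatio, div_mul_eq_mul_div, div_mul_eq_mul_div,
    div_eq_div_iff hu'.ne' hv'.ne']
  exact_mod_cast (by linear_combination hratio)

/-- Every 2-finite matrix is skew-symmetrizable: there is a diagonal matrix
`D = diag d` with positive diagonal entries such that `D B` is skew-symmetric. -/
theorem two_finite_skew_symmetrizable {n : ℕ} (B : Matrix (Fin n) (Fin n) ℤ)
    (h2f : TwoFinite B) :
    ∃ d : Fin n → ℚ, (∀ i, 0 < d i) ∧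
      ∀ i j, d i * (B i j : ℚ) = -(d j * (B j i : ℚ)) := by
  have hs := h2f.admissible.1
  let r : Fin n → Fin n → Prop := fun i j => B i j ≠ 0
  have hwalk (i : Fin n) : ∃ m u, IsWalk B m u ∧ u 0 = (Quot.mk r i).out ∧ u m = i :=
    exists_walk_of_eqvGen hs.apply_ne_zero (Quot.eqvGen_exact (Quot.out_eq _))
  choose m u hu hu0 hum using hwalk
  refine ⟨fun i => walkRatio B (m i) (u i), fun i => walkRatio_pos hs.apply_ne_zero (hu i),
    fun i j => ?_⟩
  by_cases hij : B i j = 0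
  · simp [hij, ((hs i j).resolve_right (by simp [hij])).2]
  exact h2f.walkRatio_mul_apply (hu i) (hu j) (by rw [hu0, hu0, Quot.sound hij]) (hum i) (hum j)
    hij
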